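/- arXiv:2006.10617 — 2 statements merged into one kernel-verified Lean document; each statement's English description precedes it below -/
import Mathlib

section
/- Let X be a continuum (a nonempty compact connected Hausdorff space). If some proper subcontinuum K of X (a nonempty compact connected subset with K ≠ X) has nonempty interior in X, then X is decomposable. -/
/-!
If `Kᶜ` is connected, then `X = K ∪ closure Kᶜ`, and `closure Kᶜ = (interior K)ᶜ` is proper.
Otherwise `Kᶜ` splits into two disjoint nonempty open pieces `Kᶜ ∩ u` and `Kᶜ ∩ v`, and
`X = (K ∪ u) ∪ (K ∪ v)`. Each `K ∪ u` is closed, its complement being `Kᶜ ∩ v`, and connected: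
a relatively clopen part of it avoiding `K` lies in the open set `u`, hence is clopen in `X`.
-/

open Set

section

variable {X : Type*} [TopologicalSpace X]

def IsProperSubcontinuum (A : Set X) : Prop :=
  IsCompact A ∧ IsConnected A ∧ A ≠ univ

theorem IsPreconnected.union_of_isOpen_of_isClosed [ConnectedSpace X] {K P : Set X}
    (hK : IsPreconnected K) (hKne : K.Nonempty) (hP : IsOpen P) (hKP : IsClosed (K ∪ P)) :
    IsPreconnected (K ∪ P) := by
  refine (isPreconnected_iff_subset_of_fully_disjoint_closed hKP).2 fun u v hu hv hcover huv ↦ ?_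
  wlog hKu : K ⊆ u generalizing u v
  · have hKv : K ⊆ v := (isPreconnected_iff_subset_of_disjoint_closed.1 hK u v hu hv
      (subset_union_left.trans hcover) (by rw [huv.inter_eq, inter_empty])).resolve_left hKu
    exact (this v u hv hu (union_comm u v ▸ hcover) huv.symm hKv).symm
  have hPu_eq : P \ u = (K ∪ P) ∩ v := by
    ext x
    grind
  have hPu_clopen : IsClopen (P \ u) := ⟨hPu_eq ▸ hKP.inter hv, hP.sdiff hu⟩
  have hPu_ne_univ : P \ u ≠ univ := fun h ↦ by
    obtain ⟨x, hx⟩ := hKne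
    exact (h ▸ mem_univ x : x ∈ P \ u).2 (hKu hx)
  have hPu : P ⊆ u := sdiff_eq_empty.1 ((isClopen_iff.1 hPu_clopen).resolve_right hPu_ne_univ)
  exact Or.inl (union_subset hKu hPu)

theorem isProperSubcontinuum_closure_compl [CompactSpace X] {K : Set X}
    (hK : (interior K).Nonempty) (hKc : IsConnected Kᶜ) : IsProperSubcontinuum (closure Kᶜ) :=
  ⟨isClosed_closure.isCompact, hKc.closure, by
    rw [closure_compl]; exact compl_ne_univ.2 hK⟩

theorem isProperSubcontinuum_union_of_separation [ConnectedSpace X] [CompactSpace X]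
    {K u v : Set X} (hK : IsClosed K) (hKconn : IsConnected K) (hu : IsOpen u) (hv : IsOpen v)
    (hcover : Kᶜ ⊆ u ∪ v) (hdisj : Kᶜ ∩ (u ∩ v) = ∅) (hv_ne : (Kᶜ ∩ v).Nonempty) :
    IsProperSubcontinuum (K ∪ u) := by
  have hcompl : (K ∪ u)ᶜ = Kᶜ ∩ v := by
    ext x
    have := @hcover x
    have : x ∉ Kᶜ ∩ (u ∩ v) := hdisj ▸ notMem_empty x
    grind
  have hclosed : IsClosed (K ∪ u) := isOpen_compl_iff.1 (hcompl ▸ hK.isOpen_compl.inter hv)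
  exact ⟨hclosed.isCompact, ⟨hKconn.nonempty.mono subset_union_left,
    hKconn.isPreconnected.union_of_isOpen_of_isClosed hKconn.nonempty hu hclosed⟩,
    nonempty_compl.1 (hcompl ▸ hv_ne)⟩

end

theorem decomposable_of_subcontinuum_with_interior_general
    {X : Type*} [TopologicalSpace X] [T2Space X] [CompactSpace X]
    [ConnectedSpace X]
    (K : Set X) (hKcomp : IsCompact K) (hKconn : IsConnected K)
    (hKproper : K ≠ Set.univ)
    (hint : (interior K).Nonempty) :
    ∃ A B : Set X,
      IsCompact A ∧ IsConnected A ∧ A ≠ Set.univ ∧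
      IsCompact B ∧ IsConnected B ∧ B ≠ Set.univ ∧
      A ∪ B = Set.univ := by
  obtain ⟨A, B, hA, hB, hAB⟩ :
      ∃ A B : Set X, IsProperSubcontinuum A ∧ IsProperSubcontinuum B ∧ A ∪ B = univ := by
    by_cases hKc : IsPreconnected Kᶜ
    · refine ⟨K, closure Kᶜ, ⟨hKcomp, hKconn, hKproper⟩,
        isProperSubcontinuum_closure_compl hint ⟨nonempty_compl.2 hKproper, hKc⟩, ?_⟩
      exact eq_univ_of_forall fun x ↦ (em (x ∈ K)).imp id fun hx ↦ subset_closure hx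
    · unfold IsPreconnected at hKc
      push Not at hKc
      obtain ⟨u, v, hu, hv, hcover, hu_ne, hv_ne, hdisj⟩ := hKc
      have hK := hKcomp.isClosed
      refine ⟨K ∪ u, K ∪ v,
        isProperSubcontinuum_union_of_separation hK hKconn hu hv hcover hdisj hv_ne,
        isProperSubcontinuum_union_of_separation hK hKconn hv hu (union_comm u v ▸ hcover)
          (inter_comm u v ▸ hdisj) hu_ne, ?_⟩
      exact eq_univ_of_forall fun x ↦ (em (x ∈ K)).elim (fun hx ↦ Or.inl (Or.inl hx))
        fun hx ↦ (hcover hx).imp Or.inr Or.inr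
  exact ⟨A, B, hA.1, hA.2.1, hA.2.2, hB.1, hB.2.1, hB.2.2, hAB⟩

/-- Let `X` be a continuum (nonempty compact connected Hausdorff
space). If some proper subcontinuum `K` has nonempty interior in `X`, then `X`
is decomposable (the union of two proper subcontinua). -/
theorem decomposable_of_subcontinuum_with_interior
    {X : Type*} [TopologicalSpace X] [T2Space X] [CompactSpace X]
    [ConnectedSpace X] [Nonempty X]
    (K : Set X) (hKcomp : IsCompact K) (hKconn : IsConnected K)
    (hKproper : K ≠ Set.univ)
    (hint : (interior K).Nonempty) :
    ∃ A B : Set X,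
      IsCompact A ∧ IsConnected A ∧ A ≠ Set.univ ∧
      IsCompact B ∧ IsConnected B ∧ B ≠ Set.univ ∧
      A ∪ B = Set.univ :=
  decomposable_of_subcontinuum_with_interior_general K hKcomp hKconn hKproper hint
end

section
/- Let f : Q → Q be a Lattès map with lift f̃ : 𝕋² → 𝕋², a covering map each of whose fibers has exactly d elements, with d > 1. Then the set of critical values of π is f-invariant: for every 2-torsion point z ∈ T, f(π(z)) ∈ π(T). -/
/-!
Since `π (f̃ (-x)) = f (π x) = π (f̃ x)`, at every point `f̃ (-x) = f̃ x` or `f̃ (-x) = -f̃ x`.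
If `z` is 2-torsion but `f̃ z` is not, the second alternative fails near `z`, so `f̃ (-x) = f̃ x`
there; as `f̃` is injective near the fixed point `z` of `x ↦ -x`, every point near `z` is
2-torsion. This is impossible: there are only four 2-torsion points and the torus has no isolated
points.
-/

/-- The 2-torus `𝕋² = (ℝ/ℤ) × (ℝ/ℤ)`. -/
abbrev Torus : Type := UnitAddCircle × UnitAddCircle

/-- The equivalence relation `x ∼ -x` on the torus. -/
def negSetoid : Setoid Torus where
  r x y := x = y ∨ x = -y
  iseqv := by
    refine ⟨fun x => Or.inl rfl, fun {x y} h => ?_, fun {x y z} h1 h2 => ?_⟩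
    · rcases h with h | h
      · exact Or.inl h.symm
      · right; rw [h, neg_neg]
    · rcases h1 with h1 | h1 <;> rcases h2 with h2 | h2 <;>
        simp only [h1, h2, neg_neg] <;> tauto

/-- The quotient `Q` of the torus by `x ∼ -x` (topologically a sphere). -/
abbrev Q : Type := Quotient negSetoid

/-- The quotient (branched covering) map `π : 𝕋² → Q`. -/
def piQ : Torus → Q := Quotient.mk negSetoid

/-- The set of 2-torsion points of the torus (the four branch points of `π`,
whose images under `π` are the critical values of `π`). -/
def torsion2 : Set Torus := {z : Torus | z + z = 0}

open Topology

instance : Nontrivial UnitAddCircle :=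
  nontrivial_of_ne ((1 / (2 : ℕ) : ℝ) : UnitAddCircle) 0 fun h => by
    have := AddCircle.addOrderOf_period_div (p := (1 : ℝ)) two_pos
    rw [h, addOrderOf_zero] at this
    omega

lemma mem_torsion2_iff_neg_eq {z : Torus} : z ∈ torsion2 ↔ -z = z :=
  neg_eq_iff_add_eq_zero.symm

lemma torsion2_finite : torsion2.Finite := by
  have h := AddCircle.finite_torsion (1 : ℝ) two_pos
  exact (h.prod h).subset fun z hz => by simpa [torsion2, two_nsmul, Prod.ext_iff] using hz

lemma torsion2_notMem_nhds (z : Torus) : torsion2 ∉ 𝓝 z :=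
  fun h => infinite_of_mem_nhds z h torsion2_finite

lemma piQ_eq_piQ_iff {x y : Torus} : piQ x = piQ y ↔ x = y ∨ x = -y :=
  Quotient.eq

lemma neg_eq_or_eq_neg_of_semiconj {f : Q → Q} {g : Torus → Torus}
    (hsemi : ∀ z, piQ (g z) = f (piQ z)) (x : Torus) : g (-x) = g x ∨ g (-x) = -g x :=
  piQ_eq_piQ_iff.mp <| by rw [hsemi, hsemi, piQ_eq_piQ_iff.mpr (Or.inr rfl)]

theorem eventually_neg_eq_self_of_neg_eq_or_eq_neg {G H : Type*} [TopologicalSpace G]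
    [InvolutiveNeg G] [ContinuousNeg G] [TopologicalSpace H] [T2Space H] [Neg H] [ContinuousNeg H]
    {g : G → H} (hg : Continuous g) (hinj : IsLocallyInjective g)
    (hsym : ∀ x, g (-x) = g x ∨ g (-x) = -g x) {z : G} (hz : -z = z) (hgz : g z ≠ -g z) :
    ∀ᶠ x in 𝓝 z, -x = x := by
  obtain ⟨U, hU, hinjU⟩ := isLocallyInjective_iff_nhds.mp hinj z
  have hnegU : ∀ᶠ x in 𝓝 z, -x ∈ U := continuous_neg.continuousAt.preimage_mem_nhds (by rwa [hz])
  have hne : ∀ᶠ x in 𝓝 z, g (-x) ≠ -g x :=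
    (isOpen_ne_fun (hg.comp continuous_neg) hg.neg).mem_nhds (show g (-z) ≠ -g z by rwa [hz])
  filter_upwards [hU, hnegU, hne] with x hxU hnxU hx
  exact hinjU hnxU hxU ((hsym x).resolve_right hx)

theorem lattes_branch_values_invariant_general
    (f : Q → Q)
    (ftilde : Torus → Torus) (hcov : IsCoveringMap ftilde)
    (hsemi : ∀ z : Torus, piQ (ftilde z) = f (piQ z))
    (z : Torus) (hz : z ∈ torsion2) :
    f (piQ z) ∈ piQ '' torsion2 := by
  by_cases hfz : ftilde z ∈ torsion2
  · exact ⟨ftilde z, hfz, hsemi z⟩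
  have hzneg : -z = z := mem_torsion2_iff_neg_eq.mp hz
  have hnbhd : ∀ᶠ x in 𝓝 z, -x = x :=
    eventually_neg_eq_self_of_neg_eq_or_eq_neg hcov.continuous
      hcov.isLocalHomeomorph.isLocallyInjective (neg_eq_or_eq_neg_of_semiconj hsemi) hzneg
      fun h => hfz (mem_torsion2_iff_neg_eq.mpr h.symm)
  exact absurd (hnbhd.mono fun x => mem_torsion2_iff_neg_eq.mpr) (torsion2_notMem_nhds z)

/-- For a Lattès map `f : Q → Q` with lift a covering map
`f̃ : 𝕋² → 𝕋²` all of whose fibers have exactly `d > 1` elements, the set of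
critical values of `π` is `f`-invariant: `f(π(T)) ⊆ π(T)`. -/
theorem lattes_branch_values_invariant
    (f : Q → Q) (hf : Continuous f)
    (ftilde : Torus → Torus) (hcov : IsCoveringMap ftilde)
    (d : ℕ) (hd : 1 < d)
    (hfib : ∀ z : Torus, (ftilde ⁻¹' {z}).ncard = d)
    (hsemi : ∀ z : Torus, piQ (ftilde z) = f (piQ z))
    (z : Torus) (hz : z ∈ torsion2) :
    f (piQ z) ∈ piQ '' torsion2 :=
  lattes_branch_values_invariant_general f ftilde hcov hsemi z hz
end
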